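/- Let k be a field and let A be an invertible d×d matrix over k. Then there exist invertible upper-triangular d×d matrices T and T' over k such that T'·A·T is a permutation matrix. Equivalently, A can be transformed into a permutation matrix using only the following elementary operations: multiplying a row or column by a nonzero scalar, adding a scalar multiple of a row to a row above it, and adding a scalar multiple of a column to a column to its right. -/

import Mathlib

/-!
Gaussian elimination that only ever uses upper-triangular operations. Let `i` be the lowest row
with a nonzero entry in the first column. Adding multiples of row `i` to the rows above it and
rescaling row `i` turns the first column into the unit vector `eᵢ`; adding multiples of the first
column to the later columns then clears row `i`. What is left is a `1` at `(i, 0)` with an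
invertible `d × d` minor in the complementary rows and columns. By induction the minor is reduced to
a permutation matrix, and an upper-triangular matrix on the minor, extended by a `1` at a diagonal
position, is again upper triangular.
-/

open Finset

namespace Matrix

section UpperTriangular

variable (n R : Type*) [Fintype n] [LinearOrder n] [CommRing R]

def invertibleUpperTriangular : Submonoid (Matrix n n R) :=
  (blockTriangularSubsemiring R (id : n → n)).toSubmonoid ⊓ IsUnit.submonoid _

variable {n R}

lemma mem_invertibleUpperTriangular_iff {T : Matrix n n R} :
    T ∈ invertibleUpperTriangular n R ↔ T.IsUpperTriangular ∧ IsUnit T := by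
  rw [invertibleUpperTriangular, Submonoid.mem_inf, IsUnit.mem_submonoid_iff]
  rfl

lemma mem_invertibleUpperTriangular_of_isUnit_diag {T : Matrix n n R}
    (hT : T.IsUpperTriangular) (hdiag : ∀ a, IsUnit (T a a)) :
    T ∈ invertibleUpperTriangular n R := by
  rw [mem_invertibleUpperTriangular_iff, isUnit_iff_isUnit_det, det_of_isUpperTriangular hT]
  exact ⟨hT, IsUnit.prod_univ_iff.mpr hdiag⟩

lemma exists_mem_invertibleUpperTriangular_col_mul_eq_single {m : Type*} (A : Matrix n m R)
    {i : n} {j : m} (hij : IsUnit (A i j)) (hbelow : ∀ a, i < a → A a j = 0) :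
    ∃ L ∈ invertibleUpperTriangular n R, (L * A).col j = Pi.single i 1 := by
  -- `L` adds `-A a j / A i j` times row `i` to each row `a ≠ i` and divides row `i` by `A i j`.
  set w : n → R := fun a => ((Pi.single i 1 : n → R) a - A a j) * ↑hij.unit⁻¹
  refine ⟨1 + vecMulVec w (Pi.single i 1), ?_, ?_⟩
  · refine mem_invertibleUpperTriangular_of_isUnit_diag (fun a b hba => ?_) fun a => ?_
    · have hba : b < a := hba
      rcases eq_or_ne b i with rfl | hb
      · simp [w, vecMulVec_apply, one_apply_ne hba.ne', hba.ne', hbelow a hba]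
      · simp [vecMulVec_apply, hb, one_apply_ne hba.ne']
    · rcases eq_or_ne a i with rfl | ha
      · have hdiag : 1 + (1 - A a j) * ↑hij.unit⁻¹ = ↑hij.unit⁻¹ := by
          rw [sub_mul, hij.mul_val_inv]
          ring
        simp [w, vecMulVec_apply, hdiag]
      · simp [vecMulVec_apply, ha]
  · rw [Matrix.add_mul, Matrix.one_mul, vecMulVec_mul, single_one_vecMul]
    ext a
    simp only [add_apply, col_apply, vecMulVec_apply, row_apply, w]
    rw [mul_assoc, hij.val_inv_mul]
    ring

lemma exists_mem_invertibleUpperTriangular_row_mul_eq_single {m : Type*} (B : Matrix m n R)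
    {i : m} {j : n} (hij : B i j = 1) (hleft : ∀ b, b < j → B i b = 0) :
    ∃ T ∈ invertibleUpperTriangular n R,
      (B * T).col j = B.col j ∧ (B * T).row i = Pi.single j 1 := by
  -- `T` subtracts `B i b` times column `j` from each column `b ≠ j`.
  refine ⟨1 + vecMulVec (Pi.single j 1) (Pi.single j 1 - B.row i), ?_, ?_, ?_⟩
  · refine mem_invertibleUpperTriangular_of_isUnit_diag (fun a b hba => ?_) fun a => ?_
    · have hba : b < a := hba
      rcases eq_or_ne a j with rfl | ha
      · simp [vecMulVec_apply, one_apply_ne hba.ne', hba.ne, hleft b hba]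
      · simp [vecMulVec_apply, ha, one_apply_ne hba.ne']
    · rcases eq_or_ne a j with rfl | ha
      · simp [vecMulVec_apply, hij]
      · simp [vecMulVec_apply, ha]
  all_goals
    rw [Matrix.mul_add, Matrix.mul_one, mul_vecMulVec, mulVec_single_one]
    ext
    simp [vecMulVec_apply, hij]

end UpperTriangular

section InsertPivot

variable {R : Type*} [CommRing R] {d : ℕ}

def insertPivot (i j : Fin (d + 1)) (M : Matrix (Fin d) (Fin d) R) :
    Matrix (Fin (d + 1)) (Fin (d + 1)) R :=
  Matrix.of <| Fin.insertNth i (Pi.single j 1) fun a => Fin.insertNth j 0 (M a)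

variable (i j l : Fin (d + 1)) (M N : Matrix (Fin d) (Fin d) R)

@[simp] lemma insertPivot_apply_same_same : insertPivot i j M i j = 1 := by
  simp [insertPivot]

@[simp] lemma insertPivot_apply_same_succAbove (b : Fin d) :
    insertPivot i j M i (j.succAbove b) = 0 := by
  simp [insertPivot, Fin.succAbove_ne]

@[simp] lemma insertPivot_apply_succAbove_same (a : Fin d) :
    insertPivot i j M (i.succAbove a) j = 0 := by
  simp [insertPivot]

@[simp] lemma insertPivot_apply_succAbove_succAbove (a b : Fin d) :
    insertPivot i j M (i.succAbove a) (j.succAbove b) = M a b := by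
  simp [insertPivot]

@[simp] lemma submatrix_insertPivot :
    (insertPivot i j M).submatrix i.succAbove j.succAbove = M := by
  ext a b
  simp

lemma insertPivot_mul_insertPivot :
    insertPivot i j M * insertPivot j l N = insertPivot i l (M * N) := by
  ext a b
  rw [mul_apply, Fin.sum_univ_succAbove _ j]
  cases a using Fin.succAboveCases i <;> cases b using Fin.succAboveCases l <;>
    simp [mul_apply]

lemma det_insertPivot : (insertPivot i j M).det = (-1) ^ (i + j : ℕ) * M.det := by
  rw [det_succ_column _ j, Fin.sum_univ_succAbove _ i]
  simp

lemma isUnit_insertPivot_iff : IsUnit (insertPivot i j M) ↔ IsUnit M := by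
  rw [isUnit_iff_isUnit_det, isUnit_iff_isUnit_det M, det_insertPivot,
    ((isUnit_neg_one (α := R)).pow _).mul_left_iff]

lemma insertPivot_mem_invertibleUpperTriangular {T : Matrix (Fin d) (Fin d) R}
    (hT : T ∈ invertibleUpperTriangular (Fin d) R) :
    insertPivot i i T ∈ invertibleUpperTriangular (Fin (d + 1)) R := by
  rw [mem_invertibleUpperTriangular_iff] at hT ⊢
  refine ⟨fun a b hba => ?_, (isUnit_insertPivot_iff i i T).mpr hT.2⟩
  have hba : b < a := hba
  cases a using Fin.succAboveCases i <;> cases b using Fin.succAboveCases i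
  · exact absurd hba (lt_irrefl _)
  · simp
  · simp
  · simpa using hT.1 (Fin.succAbove_lt_succAbove_iff.mp hba)

lemma eq_insertPivot_submatrix {M : Matrix (Fin (d + 1)) (Fin (d + 1)) R}
    (hcol : M.col j = Pi.single i 1) (hrow : M.row i = Pi.single j 1) :
    M = insertPivot i j (M.submatrix i.succAbove j.succAbove) := by
  ext a b
  cases a using Fin.succAboveCases i <;> cases b using Fin.succAboveCases j
  · simpa using congrFun hrow j
  · simpa [Fin.succAbove_ne] using congrFun hrow (j.succAbove _)
  · simpa [Fin.succAbove_ne] using congrFun hcol (i.succAbove _)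
  · simp

lemma exists_insertPivot_permMatrix (τ : Equiv.Perm (Fin d)) :
    ∃ σ : Equiv.Perm (Fin (d + 1)), insertPivot i j (τ.permMatrix R) = σ.permMatrix R := by
  refine ⟨(finSuccEquiv' i).trans ((Equiv.optionCongr τ).trans (finSuccEquiv' j).symm), ?_⟩
  ext a b
  cases a using Fin.succAboveCases i <;> cases b using Fin.succAboveCases j <;>
    simp [PEquiv.toMatrix_apply]

end InsertPivot

variable {K : Type*} [Field K] {d : ℕ}

lemma exists_mul_mul_eq_insertPivot (A : Matrix (Fin (d + 1)) (Fin (d + 1)) K) (hA : IsUnit A) :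
    ∃ i, ∃ L ∈ invertibleUpperTriangular (Fin (d + 1)) K,
      ∃ T ∈ invertibleUpperTriangular (Fin (d + 1)) K, ∃ C, L * A * T = insertPivot i 0 C := by
  classical
  have hcol : ∃ a, A a 0 ≠ 0 := by
    by_contra! h
    exact (isUnit_iff_isUnit_det A |>.mp hA).ne_zero (det_eq_zero_of_column_eq_zero 0 h)
  obtain ⟨i, hi, hmax⟩ := (univ.filter fun a => A a 0 ≠ 0).exists_max_image id
    (filter_nonempty_iff.mpr (by simpa using hcol))
  have hbelow : ∀ a, i < a → A a 0 = 0 := fun a ha => by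
    by_contra h
    exact (hmax a (by simpa using h)).not_gt ha
  obtain ⟨L, hL, hLA⟩ := exists_mem_invertibleUpperTriangular_col_mul_eq_single A
    (isUnit_iff_ne_zero.mpr (by simpa using hi)) hbelow
  obtain ⟨T, hT, hcolT, hrowT⟩ := exists_mem_invertibleUpperTriangular_row_mul_eq_single (L * A)
    (i := i) (j := 0) (by simpa using congrFun hLA i) fun b hb => absurd hb (Fin.not_lt_zero b)
  exact ⟨i, L, hL, T, hT, _, eq_insertPivot_submatrix i 0 (hcolT.trans hLA) hrowT⟩

theorem exists_upperTriangular_mul_mul_eq_permMatrix :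
    ∀ {d : ℕ} (A : Matrix (Fin d) (Fin d) K), IsUnit A →
      ∃ T' ∈ invertibleUpperTriangular (Fin d) K, ∃ T ∈ invertibleUpperTriangular (Fin d) K,
        ∃ σ : Equiv.Perm (Fin d), T' * A * T = σ.permMatrix K
  | 0, A, _ => ⟨1, one_mem _, 1, one_mem _, 1, Subsingleton.elim _ _⟩
  | d + 1, A, hA => by
    obtain ⟨i, L, hL, R, hR, C, hC⟩ := exists_mul_mul_eq_insertPivot A hA
    have hCunit : IsUnit C := by
      rw [← isUnit_insertPivot_iff i 0, ← hC]
      exact ((mem_invertibleUpperTriangular_iff.mp hL).2.mul hA).mul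
        (mem_invertibleUpperTriangular_iff.mp hR).2
    obtain ⟨T', hT', T, hT, τ, hτ⟩ := exists_upperTriangular_mul_mul_eq_permMatrix C hCunit
    obtain ⟨σ, hσ⟩ := exists_insertPivot_permMatrix (R := K) i 0 τ
    refine ⟨insertPivot i i T' * L, mul_mem (insertPivot_mem_invertibleUpperTriangular i hT') hL,
      R * insertPivot 0 0 T, mul_mem hR (insertPivot_mem_invertibleUpperTriangular 0 hT), σ, ?_⟩
    calc insertPivot i i T' * L * A * (R * insertPivot 0 0 T)
        = insertPivot i i T' * (L * A * R) * insertPivot 0 0 T := by simp only [mul_assoc]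
      _ = σ.permMatrix K := by
        rw [hC, insertPivot_mul_insertPivot, insertPivot_mul_insertPivot, hτ, hσ]

end Matrix

/-- Any invertible `d × d` matrix `A` over a field `k` can be written as
`T' * A * T = P` where `T`, `T'` are invertible upper-triangular matrices and `P` is a
permutation matrix. -/
theorem statement12 {k : Type} [Field k] {d : ℕ}
    (A : Matrix (Fin d) (Fin d) k) (hA : IsUnit A) :
    ∃ T T' : Matrix (Fin d) (Fin d) k,
      IsUnit T ∧ IsUnit T' ∧
      T.BlockTriangular id ∧ T'.BlockTriangular id ∧
      ∃ σ : Equiv.Perm (Fin d),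
        T' * A * T = Matrix.of fun i j => if i = σ j then (1 : k) else 0 := by
  obtain ⟨T', hT', T, hT, σ, h⟩ := Matrix.exists_upperTriangular_mul_mul_eq_permMatrix A hA
  rw [Matrix.mem_invertibleUpperTriangular_iff] at hT' hT
  -- `σ.permMatrix k` has its ones at the positions `(a, σ a)`.
  refine ⟨T, T', hT.2, hT'.2, hT.1, hT'.1, σ⁻¹, ?_⟩
  rw [h]
  ext a b
  simp [PEquiv.toMatrix_apply, Equiv.eq_symm_apply]
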